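/- arXiv:1909.13382 — 2 statements merged into one kernel-verified Lean document; each statement's English description precedes it below -/
import Mathlib

section
/- Let A be a unital C*-algebra and let p₁, ..., pₘ be mutually orthogonal projections in A summing to at most 1, with p_{m+1} := p₁. Suppose u ∈ A is a unitary with u* p_k u = p_{k+1} for 1 ≤ k ≤ m and u commutes with 1 − Σ p_k. Let v = Σ_{k=1}^m e^{2πik/m} p_k + (1 − Σ_{k=1}^m p_k). Then v is a unitary and ‖uv − vu‖ ≤ |e^{2πi/m} − 1| ≤ 2π/m. -/
/-!
Together with `q = 1 - ∑ pₖ`, the `pₖ` form a complete family of orthogonal projections, and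
`v` has unimodular coefficients on it, so `v` is unitary. Writing `v = w + q` with
`w = ∑ λₖ pₖ`, `λₖ = c^(k+1)`, `c = e^{2πi/m}`, conjugation by `u` shifts the `pₖ` cyclically,
which multiplies `w` by a scalar: `u w = c • w u`. Hence `u v - v u = (c - 1) • w u`, and
`‖w‖ ≤ 1` because `w* w = ∑ pₖ` is a projection.
-/

open scoped Real

section OrthogonalIdempotents

variable {R A ι : Type*} [CommSemiring R] [Fintype ι]

section Semiring

variable [Semiring A] [Algebra R A] {p : ι → A}

theorem OrthogonalIdempotents.sum_smul_mul_sum_smul (hp : OrthogonalIdempotents p)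
    (a b : ι → R) : (∑ i, a i • p i) * ∑ i, b i • p i = ∑ i, (a i * b i) • p i := by
  classical
  simp [Finset.sum_mul, Finset.mul_sum, hp.mul_eq, smul_smul, mul_comm]

variable [StarRing A]

theorem mul_sum_smul_eq_smul_sum_smul_mul (u : unitary A) (σ : Equiv.Perm ι)
    (hσ : ∀ i, star (u : A) * p i * u = p (σ i)) {a : ι → R} {c : R}
    (ha : ∀ i, a (σ i) = c * a i) :
    (u : A) * ∑ i, a i • p i = c • ((∑ i, a i • p i) * u) := by
  have hshift : ∀ i, (u : A) * p (σ i) = p i * u := fun i => by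
    rw [← hσ, ← mul_assoc, ← mul_assoc, Unitary.mul_star_self_of_mem u.2, one_mul]
  conv_lhs => rw [← Equiv.sum_comp σ]
  rw [Finset.mul_sum, Finset.sum_mul, Finset.smul_sum]
  refine Finset.sum_congr rfl fun i _ => ?_
  rw [mul_smul_comm, hshift, ha, mul_smul, smul_mul_assoc]

variable [StarRing R] [StarModule R A]

theorem star_sum_smul_of_isSelfAdjoint (hsa : ∀ i, IsSelfAdjoint (p i)) (a : ι → R) :
    star (∑ i, a i • p i) = ∑ i, star (a i) • p i := by
  simp [star_sum, star_smul, (hsa _).star_eq]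

theorem OrthogonalIdempotents.star_sum_smul_mul_self (hp : OrthogonalIdempotents p)
    (hsa : ∀ i, IsSelfAdjoint (p i)) {a : ι → R} (ha : ∀ i, a i ∈ unitary R) :
    star (∑ i, a i • p i) * ∑ i, a i • p i = ∑ i, p i := by
  simp [star_sum_smul_of_isSelfAdjoint hsa, hp.sum_smul_mul_sum_smul,
    Unitary.star_mul_self_of_mem (ha _)]

theorem OrthogonalIdempotents.sum_smul_mul_star_self (hp : OrthogonalIdempotents p)
    (hsa : ∀ i, IsSelfAdjoint (p i)) {a : ι → R} (ha : ∀ i, a i ∈ unitary R) :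
    (∑ i, a i • p i) * star (∑ i, a i • p i) = ∑ i, p i := by
  simp [star_sum_smul_of_isSelfAdjoint hsa, hp.sum_smul_mul_sum_smul,
    Unitary.mul_star_self_of_mem (ha _)]

theorem CompleteOrthogonalIdempotents.sum_smul_mem_unitary
    (hp : CompleteOrthogonalIdempotents p) (hsa : ∀ i, IsSelfAdjoint (p i)) {a : ι → R}
    (ha : ∀ i, a i ∈ unitary R) : ∑ i, a i • p i ∈ unitary A := by
  rw [Unitary.mem_iff, hp.star_sum_smul_mul_self hsa ha, hp.sum_smul_mul_star_self hsa ha,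
    hp.complete]
  exact ⟨rfl, rfl⟩

end Semiring

theorem OrthogonalIdempotents.sum_smul_add_one_sub_sum_mem_unitary [StarRing R] [Ring A]
    [StarRing A] [Algebra R A] [StarModule R A] {p : ι → A} (hp : OrthogonalIdempotents p)
    (hsa : ∀ i, IsSelfAdjoint (p i)) {a : ι → R} (ha : ∀ i, a i ∈ unitary R) :
    ∑ i, a i • p i + (1 - ∑ i, p i) ∈ unitary A := by
  have hsa' : ∀ j, IsSelfAdjoint (Option.elim j (1 - ∑ i, p i) p) := fun j =>
    j.rec ((IsSelfAdjoint.one A).sub (isSelfAdjoint_sum _ fun i _ => hsa i)) hsa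
  have ha' : ∀ j, Option.elim j 1 a ∈ unitary R := fun j => j.rec (one_mem _) ha
  simpa [Fintype.sum_option, add_comm] using
    (CompleteOrthogonalIdempotents.option hp).sum_smul_mem_unitary hsa' ha'

end OrthogonalIdempotents

section CStarAlgebra

variable {A ι : Type*} [CStarAlgebra A] [Fintype ι] {p : ι → A}

theorem OrthogonalIdempotents.norm_sum_smul_le_one (hp : OrthogonalIdempotents p)
    (hsa : ∀ i, IsSelfAdjoint (p i)) {a : ι → ℂ} (ha : ∀ i, a i ∈ unitary ℂ) :
    ‖∑ i, a i • p i‖ ≤ 1 := by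
  have hP : IsStarProjection (∑ i, p i) :=
    ⟨hp.isIdempotentElem_sum, isSelfAdjoint_sum _ fun i _ => hsa i⟩
  have hsq : ‖∑ i, a i • p i‖ * ‖∑ i, a i • p i‖ ≤ 1 := by
    rw [← CStarRing.norm_star_mul_self, hp.star_sum_smul_mul_self hsa ha]
    exact hP.norm_le
  nlinarith [norm_nonneg (∑ i, a i • p i)]

theorem OrthogonalIdempotents.norm_commutator_sum_smul_le (hp : OrthogonalIdempotents p)
    (hsa : ∀ i, IsSelfAdjoint (p i)) (u : unitary A) (σ : Equiv.Perm ι)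
    (hσ : ∀ i, star (u : A) * p i * u = p (σ i)) {a : ι → ℂ} {c : ℂ}
    (ha : ∀ i, a i ∈ unitary ℂ) (hac : ∀ i, a (σ i) = c * a i) :
    ‖(u : A) * ∑ i, a i • p i - (∑ i, a i • p i) * u‖ ≤ ‖c - 1‖ := by
  set w := ∑ i, a i • p i
  have hw : ‖w‖ ≤ 1 := hp.norm_sum_smul_le_one hsa ha
  rw [mul_sum_smul_eq_smul_sum_smul_mul u σ hσ hac]
  calc ‖c • (w * u) - w * u‖ = ‖c - 1‖ * ‖w‖ := by
        rw [← smul_mul_assoc, ← sub_mul, CStarRing.norm_mul_coe_unitary, ← norm_smul, sub_smul,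
          one_smul]
    _ ≤ ‖c - 1‖ := mul_le_of_le_one_right (norm_nonneg _) hw

end CStarAlgebra

theorem pow_val_add_one_of_pow_eq_one {M : Type*} [Monoid M] {m : ℕ} [NeZero m] {c : M}
    (hc : c ^ m = 1) (k : Fin m) : c ^ ((k + 1 : Fin m) : ℕ) = c ^ ((k : ℕ) + 1) := by
  rw [Fin.val_add, Fin.val_one', Nat.add_mod_mod, ← pow_eq_pow_mod _ hc]

theorem Complex.norm_exp_two_pi_I_div_sub_one_le (m : ℕ) :
    ‖Complex.exp (2 * π * Complex.I / m) - 1‖ ≤ 2 * π / m := by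
  have h : 2 * π * Complex.I / m = Complex.I * ((2 * π / m : ℝ) : ℂ) := by push_cast; ring
  rw [h]
  refine Real.norm_exp_I_mul_ofReal_sub_one_le.trans_eq ?_
  rw [Real.norm_eq_abs, abs_of_nonneg (by positivity)]

theorem stmt3_general {A : Type*} [CStarAlgebra A]
    (m : ℕ) [NeZero m] (p : Fin m → A)
    (hsa : ∀ k, IsSelfAdjoint (p k)) (hidem : ∀ k, p k * p k = p k)
    (horth : ∀ k l, k ≠ l → p k * p l = 0)
    (u : unitary A)
    (hcyc : ∀ k : Fin m, star (u : A) * p k * (u : A) = p (k + 1))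
    (hcomm : Commute (u : A) (1 - ∑ k, p k))
    (v : A)
    (hv : v = (∑ k : Fin m, Complex.exp (2 * π * Complex.I * ((k : ℕ) + 1) / m) • p k)
        + (1 - ∑ k, p k)) :
    v ∈ unitary A ∧
      ‖(u : A) * v - v * (u : A)‖ ≤ ‖Complex.exp (2 * π * Complex.I / m) - 1‖ ∧
      ‖Complex.exp (2 * π * Complex.I / m) - 1‖ ≤ 2 * π / m := by
  set c := Complex.exp (2 * π * Complex.I / m)
  have hcm : c ^ m = 1 := (Complex.isPrimitiveRoot_exp m (NeZero.ne m)).pow_eq_one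
  have hc : c ∈ unitary ℂ := by
    rw [Unitary.mem_iff, Complex.star_def, Complex.conj_mul', Complex.mul_conj',
      Complex.norm_eq_one_of_pow_eq_one hcm (NeZero.ne m)]
    norm_num
  set a : Fin m → ℂ := fun k => c ^ ((k : ℕ) + 1)
  have hva : v = ∑ k, a k • p k + (1 - ∑ k, p k) := by
    have hexp : ∀ k : Fin m, Complex.exp (2 * π * Complex.I * ((k : ℕ) + 1) / m) = a k :=
      fun k => by
        simp only [a, c, ← Complex.exp_nat_mul]
        push_cast
        ring_nf
    simp only [hv, hexp]
  have hp : OrthogonalIdempotents p := ⟨hidem, fun k l hkl => horth k l hkl⟩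
  have ha : ∀ k, a k ∈ unitary ℂ := fun k => pow_mem hc _
  have hac : ∀ k, a (Equiv.addRight 1 k) = c * a k := fun k => by
    simp only [a, Equiv.coe_addRight, pow_val_add_one_of_pow_eq_one hcm, pow_succ']
  refine ⟨hva ▸ hp.sum_smul_add_one_sub_sum_mem_unitary hsa ha, ?_,
    Complex.norm_exp_two_pi_I_div_sub_one_le m⟩
  rw [hva, mul_add, add_mul, hcomm.eq, add_sub_add_right_eq_sub]
  exact hp.norm_commutator_sum_smul_le hsa u (Equiv.addRight 1) hcyc ha hac

/-- Let `A` be a unital C*-algebra, `p 1, …, p m` mutually orthogonal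
projections summing to at most `1`, cyclically permuted by a unitary `u`
(`u* (p k) u = p (k+1)` cyclically) which commutes with `1 - ∑ p k`.  Then
`v = ∑ₖ e^{2πik/m} p k + (1 - ∑ p k)` is a unitary and
`‖uv - vu‖ ≤ |e^{2πi/m} - 1| ≤ 2π/m`. -/
theorem stmt3 {A : Type*} [CStarAlgebra A] [PartialOrder A] [StarOrderedRing A]
    (m : ℕ) [NeZero m] (p : Fin m → A)
    (hsa : ∀ k, IsSelfAdjoint (p k)) (hidem : ∀ k, p k * p k = p k)
    (horth : ∀ k l, k ≠ l → p k * p l = 0)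
    (hsum : (∑ k, p k) ≤ 1)
    (u : unitary A)
    (hcyc : ∀ k : Fin m, star (u : A) * p k * (u : A) = p (k + 1))
    (hcomm : Commute (u : A) (1 - ∑ k, p k))
    (v : A)
    (hv : v = (∑ k : Fin m, Complex.exp (2 * π * Complex.I * ((k : ℕ) + 1) / m) • p k)
        + (1 - ∑ k, p k)) :
    v ∈ unitary A ∧
      ‖(u : A) * v - v * (u : A)‖ ≤ ‖Complex.exp (2 * π * Complex.I / m) - 1‖ ∧
      ‖Complex.exp (2 * π * Complex.I / m) - 1‖ ≤ 2 * π / m :=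
  stmt3_general m p hsa hidem horth u hcyc hcomm v hv
end

section
/- Let C = A(F₁, F₂, φ₀, φ₁) = {(f,g) ∈ C([0,1],F₂) ⊕ F₁ : f(0) = φ₀(g), f(1) = φ₁(g)} be an Elliott–Thomsen building block (one-dimensional NCCW), where F₁ = ⊕_{i=1}^l M_{r(i)} and F₂ are finite-dimensional and φ₀, φ₁ : F₁ → F₂ are unital homomorphisms. Identify K₀(C) with a subgroup of K₀(F₁) ≅ Z^l via the evaluation-at-endpoint map. Suppose x ∈ K₀(C) corresponds to (x₁,...,x_l) ∈ Z^l and satisfies |x_s|/(r(s)·n) < ε for all s and some n ≥ 1. Let T = max_s |x_s|/r(s) and z = T·(r(1),...,r(l)). Then z ∈ K₀(C)₊, y := x + z ∈ K₀(C)₊, x = y − z, and every tracial state τ of C ⊗ M_n satisfies τ(q) < ε and τ(p) < 2ε for projections p, q over C ⊗ M_n with [p] = y, [q] = z. -/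
/-!
Let `ρ = (r 1, …, r l)` and `T = max_s |x s| / r s`, attained at some `s₀`. Then `|x| ≤ T ρ`
componentwise, so `z = T ρ` and `y = x + z` are nonnegative and `y ≤ 2 z`. Clearing the
denominator `r s₀` of `T` gives `r s₀ • z = |x s₀| • ρ` and `r s₀ • y = r s₀ • x + |x s₀| • ρ`,
both in `G`. A positive functional normalised by `t (n • ρ) = 1` has `t ρ = 1 / n`, hence
`t z = T / n = |x s₀| / (r s₀ * n) < ε` and `t y ≤ 2 t z < 2 ε`.
-/

open Finset

lemma abs_le_sup'_abs_div_mul {ι K : Type*} [Fintype ι] [Nonempty ι] [Field K] [LinearOrder K]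
    [IsStrictOrderedRing K] {x r : ι → K} (hr : ∀ s, 0 < r s) (s : ι) :
    |x s| ≤ univ.sup' univ_nonempty (fun s => |x s| / r s) * r s :=
  (div_le_iff₀ (hr s)).1 (le_sup' (fun s => |x s| / r s) (mem_univ s))

namespace LinearMap

lemma map_const_mul_eq_div {ι K : Type*} [Field K] (t : (ι → K) →ₗ[K] K) {ρ : ι → K} {n : ℕ}
    (hnorm : t (fun s => n * ρ s) = 1) (T : K) : t (fun s => T * ρ s) = T / n := by
  have htρ : t ρ = (n : K)⁻¹ := eq_inv_of_mul_eq_one_right <| by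
    rw [← smul_eq_mul, ← map_smul]; exact hnorm
  rw [show (fun s => T * ρ s) = T • ρ from rfl, map_smul, htρ, smul_eq_mul, div_eq_mul_inv]

variable {ι K : Type*} [Field K] [LinearOrder K] [IsStrictOrderedRing K] {t : (ι → K) →ₗ[K] K}

lemma map_le_map_of_nonneg (ht : ∀ w : ι → K, (∀ s, 0 ≤ w s) → 0 ≤ t w) {v w : ι → K}
    (hvw : ∀ s, v s ≤ w s) : t v ≤ t w := by
  have := ht (w - v) fun s => sub_nonneg.2 (hvw s)
  rwa [map_sub, sub_nonneg] at this

lemma map_add_le_two_mul (ht : ∀ w : ι → K, (∀ s, 0 ≤ w s) → 0 ≤ t w) {x w : ι → K}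
    (hxw : ∀ s, |x s| ≤ w s) : t (fun s => x s + w s) ≤ 2 * t w := by
  rw [← smul_eq_mul, ← map_smul]
  exact map_le_map_of_nonneg ht fun s => by
    simp only [Pi.smul_apply, smul_eq_mul]; linarith [le_abs_self (x s), hxw s]

end LinearMap

lemma natCast_mul_mem_image_intCast {ι : Type*} {G : AddSubgroup (ι → ℤ)} {g : ι → ℤ}
    (hg : g ∈ G) {q : ι → ℚ} {m : ℕ} (hm : 0 < m) (hq : ∀ s, m * q s = g s) :
    ∃ m : ℕ, 0 < m ∧ (fun s => (m : ℚ) * q s) ∈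
      (fun g : ι → ℤ => fun s => (g s : ℚ)) '' (G : Set (ι → ℤ)) :=
  ⟨m, hm, g, hg, funext fun s => (hq s).symm⟩

theorem stmt18_general (l : ℕ) [NeZero l] (r : Fin l → ℕ) (hr : ∀ s, 1 ≤ r s)
    (G : AddSubgroup (Fin l → ℤ)) (hrG : (fun s => (r s : ℤ)) ∈ G)
    (n : ℕ) (ε : ℚ)
    (x : Fin l → ℤ) (hx : x ∈ G)
    (hsmall : ∀ s, |(x s : ℚ)| / (r s * n) < ε)
    (T : ℚ) (hT : T = Finset.univ.sup' Finset.univ_nonempty (fun s => |(x s : ℚ)| / r s))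
    (z y : Fin l → ℚ)
    (hz : z = fun s => T * r s) (hy : y = fun s => (x s : ℚ) + z s) :
    -- `z` and `y` lie in the (rationalized) positive cone of `K₀(C)`:
    (∀ s, 0 ≤ z s) ∧ (∀ s, 0 ≤ y s) ∧
    (∃ m : ℕ, 0 < m ∧ (fun s => (m : ℚ) * z s) ∈
        (fun g : Fin l → ℤ => fun s => ((g s : ℚ))) '' (G : Set (Fin l → ℤ))) ∧
    (∃ m : ℕ, 0 < m ∧ (fun s => (m : ℚ) * y s) ∈
        (fun g : Fin l → ℤ => fun s => ((g s : ℚ))) '' (G : Set (Fin l → ℤ))) ∧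
    -- `x = y - z`:
    (∀ s, (x s : ℚ) = y s - z s) ∧
    -- trace estimates for tracial states of `C ⊗ Mₙ`:
    (∀ t : (Fin l → ℚ) →ₗ[ℚ] ℚ,
      (∀ w : Fin l → ℚ, (∀ s, 0 ≤ w s) → 0 ≤ t w) →
      t (fun s => (n : ℚ) * r s) = 1 →
      t z < ε ∧ t y < 2 * ε) := by
  subst hz hy
  have hr₀ : ∀ s, (0 : ℚ) < r s := fun s => Nat.cast_pos.2 (hr s)
  have hxT : ∀ s, |(x s : ℚ)| ≤ T * r s := fun s => hT ▸ abs_le_sup'_abs_div_mul hr₀ s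
  obtain ⟨s₀, -, hs₀⟩ := exists_mem_eq_sup' univ_nonempty (fun s => |(x s : ℚ)| / r s)
  rw [← hT] at hs₀
  have hden : (r s₀ : ℚ) * T = |(x s₀ : ℚ)| := by rw [hs₀]; field_simp [(hr₀ s₀).ne']
  refine ⟨fun s => (abs_nonneg _).trans (hxT s), fun s => by linarith [neg_abs_le (x s : ℚ), hxT s],
    natCast_mul_mem_image_intCast (G.zsmul_mem hrG |x s₀|) (hr s₀) fun s => ?_,
    natCast_mul_mem_image_intCast (G.add_mem (G.zsmul_mem hx (r s₀)) (G.zsmul_mem hrG |x s₀|))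
      (hr s₀) fun s => ?_, fun s => by ring, fun t ht hnorm => ?_⟩
  · simp [← mul_assoc, hden]
  · simp [mul_add, ← mul_assoc, hden]
  · have htz := t.map_const_mul_eq_div hnorm T
    have hTn : T / n < ε := by simpa [hs₀, div_div] using hsmall s₀
    exact ⟨htz ▸ hTn, (t.map_add_le_two_mul ht hxT).trans_lt (by linarith)⟩

/-- For an Elliott–Thomsen building block `C = A(F₁,F₂,φ₀,φ₁)` with
`F₁ = ⊕ᵢ M_{r i}`, identify `K₀(C)` with a subgroup `G` of `ℤ^l` via evaluation at an
endpoint; the class of the unit corresponds to `(r 1, …, r l)` and the positive cone is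
cut out by componentwise nonnegativity.  If `x ∈ G` satisfies `|x s|/(r s · n) < ε` for
all `s`, then with `T = max_s |x s|/r s` and `z = T·(r 1, …, r l)`, `y = x + z`, one has
`z, y` in the (rationalized) positive cone, `x = y - z`, and every tracial state of
`C ⊗ Mₙ` — inducing a positive additive state `t` on `K₀` normalized by
`t(n·[1_C]) = 1` — satisfies `t z < ε` and `t y < 2ε`. -/
theorem stmt18 (l : ℕ) [NeZero l] (r : Fin l → ℕ) (hr : ∀ s, 1 ≤ r s)
    (G : AddSubgroup (Fin l → ℤ)) (hrG : (fun s => (r s : ℤ)) ∈ G)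
    (n : ℕ) (hn : 1 ≤ n) (ε : ℚ) (hε : 0 < ε)
    (x : Fin l → ℤ) (hx : x ∈ G)
    (hsmall : ∀ s, |(x s : ℚ)| / (r s * n) < ε)
    (T : ℚ) (hT : T = Finset.univ.sup' Finset.univ_nonempty (fun s => |(x s : ℚ)| / r s))
    (z y : Fin l → ℚ)
    (hz : z = fun s => T * r s) (hy : y = fun s => (x s : ℚ) + z s) :
    -- `z` and `y` lie in the (rationalized) positive cone of `K₀(C)`:
    (∀ s, 0 ≤ z s) ∧ (∀ s, 0 ≤ y s) ∧
    (∃ m : ℕ, 0 < m ∧ (fun s => (m : ℚ) * z s) ∈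
        (fun g : Fin l → ℤ => fun s => ((g s : ℚ))) '' (G : Set (Fin l → ℤ))) ∧
    (∃ m : ℕ, 0 < m ∧ (fun s => (m : ℚ) * y s) ∈
        (fun g : Fin l → ℤ => fun s => ((g s : ℚ))) '' (G : Set (Fin l → ℤ))) ∧
    -- `x = y - z`:
    (∀ s, (x s : ℚ) = y s - z s) ∧
    -- trace estimates for tracial states of `C ⊗ Mₙ`:
    (∀ t : (Fin l → ℚ) →ₗ[ℚ] ℚ,
      (∀ w : Fin l → ℚ, (∀ s, 0 ≤ w s) → 0 ≤ t w) →
      t (fun s => (n : ℚ) * r s) = 1 →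
      t z < ε ∧ t y < 2 * ε) :=
  stmt18_general l r hr G hrG n ε x hx hsmall T hT z y hz hy
end
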